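/- Let there be n ≥ 1 players. For each k = 1,…,n let A_k be a real m_k×d_k matrix with full row rank, b_k ∈ ℝ^{m_k}, and suppose M_k = {x ∈ Δ^{d_k−1} : A_k x = b_k} is nonempty. Let ℓ_k : ℝ^{d_1}×⋯×ℝ^{d_n} → ℝ be differentiable and convex in its k-th argument. Fix a profile μ = (μ_1,…,μ_n) with each μ_k ∈ M_k having all coordinates strictly positive, and let τ > 0. Define ε_k = ℓ_k(μ) − min_{z ∈ M_k} ℓ_k(z, μ_{−k}), let ∇^{kτ} be the gradient with respect to μ_k of ℓ_k(μ) − τH(μ_k), and let L^τ = Σ_{k=1}^n ‖Π_{A_k} ∇^{kτ}‖₂². Then max_k ε_k ≤ τ log(max_k d_k) + √(2 n L^τ). -/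

import Mathlib

open Matrix

/-- Tangent-space projection matrix `Π_A = I − Aᵀ(AAᵀ)⁻¹A`. -/
noncomputable def projMat {m d : ℕ} (A : Matrix (Fin m) (Fin d) ℝ) :
    Matrix (Fin d) (Fin d) ℝ :=
  1 - Aᵀ * (A * Aᵀ)⁻¹ * A

/-- The gradient of `f : ℝ^d → ℝ` at `x`. -/
noncomputable def grad {d : ℕ} (f : (Fin d → ℝ) → ℝ) (x : Fin d → ℝ) : Fin d → ℝ :=
  fun k => fderiv ℝ f x (Pi.single k 1)

/-- Shannon entropy `H(x) = −∑ₖ xₖ log xₖ`. -/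
noncomputable def shannonEntropy {d : ℕ} (x : Fin d → ℝ) : ℝ :=
  -∑ k, x k * Real.log (x k)

/-!
Fix a player `k`, let `f` be its loss as a function of its own strategy, `x = μ_k`, and
`v = ∇(f - τH)(x)`. For a competitor `z ∈ M_k`, convexity gives
`f x - f z ≤ ⟨x - z, ∇f x⟩ = ⟨x - z, v⟩ + τ ⟨x - z, ∇H x⟩`.
Since `A (x - z) = 0` and `Π_A` is symmetric and fixes `ker A`, `⟨x - z, v⟩ = ⟨x - z, Π_A v⟩`,
which Cauchy–Schwarz and `‖x - z‖² ≤ 2` on the simplex bound by `√(2 ‖Π_A v‖²)`.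
As `∇H x = -(log x + 1)`, the entropic term is `τ (H x + ∑ⱼ zⱼ log xⱼ) ≤ τ H x ≤ τ log d_k`.
-/

open Matrix Set

theorem ConvexOn.sub_le_fderiv_sub {E : Type*} [NormedAddCommGroup E] [NormedSpace ℝ E]
    {s : Set E} {f : E → ℝ} (hf : ConvexOn ℝ s f) {x y : E} (hx : x ∈ s) (hy : y ∈ s)
    (hfx : DifferentiableAt ℝ f x) :
    f x - f y ≤ fderiv ℝ f x (x - y) := by
  have hline : HasDerivAt (f ∘ AffineMap.lineMap (k := ℝ) x y) (fderiv ℝ f x (y - x)) 0 := by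
    have hf0 : HasFDerivAt f (fderiv ℝ f x) (AffineMap.lineMap x y (0 : ℝ)) := by
      simpa using hfx.hasFDerivAt
    exact hf0.comp_hasDerivAt 0 AffineMap.hasDerivAt_lineMap
  have hslope := (hf.comp_affineMap (AffineMap.lineMap x y)).le_slope_of_hasDerivAt
    (by simpa using hx) (by simpa using hy) one_pos hline
  rw [slope_def_field] at hslope
  simp only [Function.comp_apply, AffineMap.lineMap_apply_zero, AffineMap.lineMap_apply_one,
    sub_zero, div_one] at hslope
  rw [← neg_sub y x, map_neg]
  linarith

section Gradient

variable {d : ℕ}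

theorem fderiv_apply_eq_dotProduct_grad (f : (Fin d → ℝ) → ℝ) (x v : Fin d → ℝ) :
    fderiv ℝ f x v = v ⬝ᵥ grad f x := by
  conv_lhs => rw [← Finset.univ_sum_single v]
  simp only [map_sum, dotProduct, grad]
  refine Finset.sum_congr rfl fun i _ ↦ ?_
  rw [show Pi.single i (v i) = v i • Pi.single i (1 : ℝ) by
    rw [← Pi.single_smul', smul_eq_mul, mul_one], map_smul, smul_eq_mul]

theorem grad_sub_const_mul {f g : (Fin d → ℝ) → ℝ} {x : Fin d → ℝ}
    (hf : DifferentiableAt ℝ f x) (hg : DifferentiableAt ℝ g x) (c : ℝ) :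
    grad (fun z ↦ f z - c * g z) x = grad f x - c • grad g x := by
  funext j
  simp [grad, fderiv_fun_sub hf (hg.const_mul c), fderiv_const_mul hg]

end Gradient

section Entropy

variable {d : ℕ}

theorem shannonEntropy_eq_sum_negMulLog (x : Fin d → ℝ) :
    shannonEntropy x = ∑ j, Real.negMulLog (x j) := by
  simp [shannonEntropy, Real.negMulLog_eq_neg]

theorem hasFDerivAt_shannonEntropy {x : Fin d → ℝ} (hx : ∀ j, x j ≠ 0) :
    HasFDerivAt shannonEntropy
      (∑ j, (-Real.log (x j) - 1) • (ContinuousLinearMap.proj j : (Fin d → ℝ) →L[ℝ] ℝ)) x := by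
  simp_rw [funext shannonEntropy_eq_sum_negMulLog]
  exact HasFDerivAt.fun_sum fun j _ ↦
    (Real.hasDerivAt_negMulLog (hx j)).comp_hasFDerivAt (f := fun y : Fin d → ℝ ↦ y j) x
      (hasFDerivAt_apply j x)

theorem grad_shannonEntropy {x : Fin d → ℝ} (hx : ∀ j, x j ≠ 0) :
    grad shannonEntropy x = fun j ↦ -Real.log (x j) - 1 := by
  funext j
  simp [grad, (hasFDerivAt_shannonEntropy hx).fderiv, Pi.single_apply]

theorem shannonEntropy_le_log {x : Fin d → ℝ} (hpos : ∀ j, 0 < x j) (hsum : ∑ j, x j = 1) :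
    shannonEntropy x ≤ Real.log d := by
  have hjensen := strictConcaveOn_log_Ioi.concaveOn.le_map_sum (t := Finset.univ)
    (p := fun j ↦ (x j)⁻¹) (fun j _ ↦ (hpos j).le) hsum fun j _ ↦ inv_pos.mpr (hpos j)
  simpa [shannonEntropy, Real.log_inv, mul_inv_cancel₀ (hpos _).ne'] using hjensen

theorem dotProduct_grad_shannonEntropy_le {x z : Fin d → ℝ} (hx : x ∈ stdSimplex ℝ (Fin d))
    (hxpos : ∀ j, 0 < x j) (hz : z ∈ stdSimplex ℝ (Fin d)) :
    (x - z) ⬝ᵥ grad shannonEntropy x ≤ shannonEntropy x := by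
  have hcross : ∑ j, z j * Real.log (x j) ≤ 0 := Finset.sum_nonpos fun j _ ↦
    mul_nonpos_of_nonneg_of_nonpos (hz.1 j)
      (Real.log_nonpos (hx.1 j) (mem_Icc_of_mem_stdSimplex hx j).2)
  have hexpand : (x - z) ⬝ᵥ grad shannonEntropy x =
      shannonEntropy x + ∑ j, z j * Real.log (x j) + (∑ j, z j - ∑ j, x j) := by
    simp only [grad_shannonEntropy fun j ↦ (hxpos j).ne', dotProduct, shannonEntropy,
      Pi.sub_apply, ← Finset.sum_sub_distrib, ← Finset.sum_neg_distrib,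
      ← Finset.sum_add_distrib]
    exact Finset.sum_congr rfl fun j _ ↦ by ring
  rw [hexpand, hx.2, hz.2]
  linarith

end Entropy

section Projection

variable {m d : ℕ} (A : Matrix (Fin m) (Fin d) ℝ)

theorem projMat_transpose : (projMat A)ᵀ = projMat A := by
  simp [projMat, transpose_sub, transpose_mul, transpose_nonsing_inv, Matrix.mul_assoc]

theorem projMat_mulVec_of_mulVec_eq_zero {w : Fin d → ℝ} (hw : A *ᵥ w = 0) :
    projMat A *ᵥ w = w := by
  simp [projMat, sub_mulVec, ← mulVec_mulVec, hw]

theorem dotProduct_projMat_mulVec {w : Fin d → ℝ} (hw : A *ᵥ w = 0) (v : Fin d → ℝ) :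
    w ⬝ᵥ (projMat A *ᵥ v) = w ⬝ᵥ v := by
  rw [dotProduct_mulVec, ← mulVec_transpose, projMat_transpose,
    projMat_mulVec_of_mulVec_eq_zero A hw]

end Projection

section Simplex

variable {ι : Type*} [Fintype ι]

theorem sum_sub_sq_le_two_of_mem_stdSimplex {x z : ι → ℝ} (hx : x ∈ stdSimplex ℝ ι)
    (hz : z ∈ stdSimplex ℝ ι) : ∑ j, (x j - z j) ^ 2 ≤ 2 := by
  calc ∑ j, (x j - z j) ^ 2 ≤ ∑ j, (x j + z j) := Finset.sum_le_sum fun j _ ↦ by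
        have hxj := mem_Icc_of_mem_stdSimplex hx j
        have hzj := mem_Icc_of_mem_stdSimplex hz j
        nlinarith [hxj.1, hxj.2, hzj.1, hzj.2]
    _ = 2 := by rw [Finset.sum_add_distrib, hx.2, hz.2]; norm_num

theorem sub_dotProduct_le_sqrt_of_mem_stdSimplex {x z : ι → ℝ} (hx : x ∈ stdSimplex ℝ ι)
    (hz : z ∈ stdSimplex ℝ ι) (u : ι → ℝ) : (x - z) ⬝ᵥ u ≤ √(2 * ∑ j, u j ^ 2) := by
  calc (x - z) ⬝ᵥ u ≤ √(∑ j, (x j - z j) ^ 2) * √(∑ j, u j ^ 2) :=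
        Real.sum_mul_le_sqrt_mul_sqrt _ _ _
    _ ≤ √2 * √(∑ j, u j ^ 2) := by gcongr; exact sum_sub_sq_le_two_of_mem_stdSimplex hx hz
    _ = √(2 * ∑ j, u j ^ 2) := (Real.sqrt_mul zero_le_two _).symm

end Simplex

theorem sub_csInf_image_le {α : Type*} {f : α → ℝ} {s : Set α} (hs : s.Nonempty) {a c : ℝ}
    (h : ∀ z ∈ s, a - f z ≤ c) : a - sInf (f '' s) ≤ c :=
  sub_le_comm.mp <| le_csInf (hs.image f) <| forall_mem_image.2 fun z hz ↦ sub_le_comm.mp (h z hz)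

theorem ConvexOn.sub_le_mul_shannonEntropy_add_sqrt {m d : ℕ} {f : (Fin d → ℝ) → ℝ}
    (hf : ConvexOn ℝ univ f) {x z : Fin d → ℝ} (hfx : DifferentiableAt ℝ f x)
    (A : Matrix (Fin m) (Fin d) ℝ) (hx : x ∈ stdSimplex ℝ (Fin d)) (hxpos : ∀ j, 0 < x j)
    (hz : z ∈ stdSimplex ℝ (Fin d)) (hAz : A *ᵥ z = A *ᵥ x) {τ : ℝ} (hτ : 0 ≤ τ) :
    f x - f z ≤ τ * shannonEntropy x +
      √(2 * ∑ j, (projMat A *ᵥ grad (fun y ↦ f y - τ * shannonEntropy y) x) j ^ 2) := by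
  set v := grad (fun y ↦ f y - τ * shannonEntropy y) x
  have hH : DifferentiableAt ℝ shannonEntropy x :=
    (hasFDerivAt_shannonEntropy fun j ↦ (hxpos j).ne').differentiableAt
  have hgrad : grad f x = v + τ • grad shannonEntropy x :=
    sub_eq_iff_eq_add.mp (grad_sub_const_mul hfx hH τ).symm
  have hker : A *ᵥ (x - z) = 0 := by rw [mulVec_sub, hAz, sub_self]
  calc f x - f z ≤ (x - z) ⬝ᵥ grad f x := by
        rw [← fderiv_apply_eq_dotProduct_grad]
        exact hf.sub_le_fderiv_sub trivial trivial hfx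
    _ = (x - z) ⬝ᵥ (projMat A *ᵥ v) + τ * ((x - z) ⬝ᵥ grad shannonEntropy x) := by
        rw [hgrad, dotProduct_add, dotProduct_smul, smul_eq_mul, dotProduct_projMat_mulVec A hker]
    _ ≤ √(2 * ∑ j, (projMat A *ᵥ v) j ^ 2) + τ * shannonEntropy x := by
        gcongr
        · exact sub_dotProduct_le_sqrt_of_mem_stdSimplex hx hz _
        · exact dotProduct_grad_shannonEntropy_le hx hxpos hz
    _ = _ := add_comm _ _

theorem projected_gradient_loss_scores_nash_general
    {n : ℕ} (d m' : Fin n → ℕ)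
    (A : ∀ k, Matrix (Fin (m' k)) (Fin (d k)) ℝ)
    (b : ∀ k, Fin (m' k) → ℝ)
    (ℓ : ∀ _ : Fin n, ((k : Fin n) → (Fin (d k) → ℝ)) → ℝ)
    (hdiff : ∀ k, Differentiable ℝ (ℓ k))
    (hconv : ∀ k (x : (j : Fin n) → (Fin (d j) → ℝ)),
      ConvexOn ℝ Set.univ (fun z : Fin (d k) → ℝ => ℓ k (Function.update x k z)))
    (μ : (k : Fin n) → (Fin (d k) → ℝ))
    (hμ : ∀ k, μ k ∈ stdSimplex ℝ (Fin (d k)) ∧ A k *ᵥ μ k = b k)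
    (hμpos : ∀ k j, 0 < μ k j)
    (τ : ℝ) (hτ : 0 < τ) :
    ∀ k : Fin n,
      ℓ k μ -
          sInf ((fun z : Fin (d k) → ℝ => ℓ k (Function.update μ k z)) ''
            {x : Fin (d k) → ℝ | x ∈ stdSimplex ℝ (Fin (d k)) ∧ A k *ᵥ x = b k}) ≤
        τ * Real.log ((Finset.univ.sup d : ℕ) : ℝ) +
          Real.sqrt (2 * n *
            (∑ k : Fin n, ∑ j,
              (projMat (A k) *ᵥ
                grad (fun z : Fin (d k) → ℝ =>
                  ℓ k (Function.update μ k z) - τ * shannonEntropy z) (μ k)) j ^ 2)) := by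
  intro k
  obtain ⟨hμk, hAμk⟩ := hμ k
  have hfk : Differentiable ℝ fun z : Fin (d k) → ℝ ↦ ℓ k (Function.update μ k z) :=
    (hdiff k).comp fun z ↦ (hasFDerivAt_update μ z).differentiableAt
  have hdk : 0 < d k := Fin.pos_iff_nonempty.2 <| Finset.univ_nonempty_iff.1 <|
    Finset.nonempty_of_sum_ne_zero (hμk.2.symm ▸ one_ne_zero)
  have hn : (1 : ℝ) ≤ n := by exact_mod_cast k.pos
  have hent : shannonEntropy (μ k) ≤ Real.log ((Finset.univ.sup d : ℕ) : ℝ) :=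
    (shannonEntropy_le_log (hμpos k) hμk.2).trans <| Real.log_le_log (by exact_mod_cast hdk) <|
      by exact_mod_cast Finset.le_sup (f := d) (Finset.mem_univ k)
  calc _ ≤ τ * shannonEntropy (μ k) + √(2 * ∑ j, (projMat (A k) *ᵥ
        grad (fun z ↦ ℓ k (Function.update μ k z) - τ * shannonEntropy z) (μ k)) j ^ 2) := by
        refine sub_csInf_image_le ⟨μ k, hμ k⟩ fun z ⟨hz, hAz⟩ ↦ ?_
        rw [show ℓ k μ = ℓ k (Function.update μ k (μ k)) by rw [Function.update_eq_self]]
        exact (hconv k μ).sub_le_mul_shannonEntropy_add_sqrt (hfk _) (A k) hμk (hμpos k) hz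
          (hAz.trans hAμk.symm) hτ.le
    _ ≤ _ := by
        gcongr
        · linarith
        · exact Finset.single_le_sum (f := fun i ↦ ∑ j, (projMat (A i) *ᵥ grad (fun z ↦
            ℓ i (Function.update μ i z) - τ * shannonEntropy z) (μ i)) j ^ 2)
            (fun i _ ↦ by positivity) (Finset.mem_univ k)

/-- The projected-gradient loss `L^τ` bounds exploitability:
`max_k ε_k ≤ τ log(max_k d_k) + √(2 n L^τ)`. -/
theorem projected_gradient_loss_scores_nash
    {n : ℕ} (hn : 1 ≤ n) (d m' : Fin n → ℕ)
    (A : ∀ k, Matrix (Fin (m' k)) (Fin (d k)) ℝ)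
    (hA : ∀ k, (A k).rank = m' k)
    (b : ∀ k, Fin (m' k) → ℝ)
    (hM : ∀ k, {x : Fin (d k) → ℝ | x ∈ stdSimplex ℝ (Fin (d k)) ∧ A k *ᵥ x = b k}.Nonempty)
    (ℓ : ∀ _ : Fin n, ((k : Fin n) → (Fin (d k) → ℝ)) → ℝ)
    (hdiff : ∀ k, Differentiable ℝ (ℓ k))
    (hconv : ∀ k (x : (j : Fin n) → (Fin (d j) → ℝ)),
      ConvexOn ℝ Set.univ (fun z : Fin (d k) → ℝ => ℓ k (Function.update x k z)))
    (μ : (k : Fin n) → (Fin (d k) → ℝ))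
    (hμ : ∀ k, μ k ∈ stdSimplex ℝ (Fin (d k)) ∧ A k *ᵥ μ k = b k)
    (hμpos : ∀ k j, 0 < μ k j)
    (τ : ℝ) (hτ : 0 < τ) :
    ∀ k : Fin n,
      ℓ k μ -
          sInf ((fun z : Fin (d k) → ℝ => ℓ k (Function.update μ k z)) ''
            {x : Fin (d k) → ℝ | x ∈ stdSimplex ℝ (Fin (d k)) ∧ A k *ᵥ x = b k}) ≤
        τ * Real.log ((Finset.univ.sup d : ℕ) : ℝ) +
          Real.sqrt (2 * n *
            (∑ k : Fin n, ∑ j,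
              (projMat (A k) *ᵥ
                grad (fun z : Fin (d k) → ℝ =>
                  ℓ k (Function.update μ k z) - τ * shannonEntropy z) (μ k)) j ^ 2)) :=
  projected_gradient_loss_scores_nash_general d m' A b ℓ hdiff hconv μ hμ hμpos τ hτ
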